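/- arXiv:2211.04450 — 5 statements merged into one kernel-verified Lean document; each statement's English description precedes it below -/
import Mathlib

section
/- Let s, t be real with s ≠ 0, s² + 4t > 0, let φ = (s+√(s²+4t))/2 and q = φ'/φ with 0 < |q| < 1. Then for u real with 0 ≤ u < 1/φ the sequence u^{n−1}·{n}_{s,t} tends to 0 as n → ∞, and for u = 1/φ it tends to 1/(1−q). -/
open Filter

/-- Generalized Fibonacci polynomials: {0}=0, {1}=1, {n+2}=s{n+1}+t{n}. -/
def genFib (s t : ℝ) : ℕ → ℝ
  | 0 => 0
  | 1 => 1
  | n + 2 => s * genFib s t (n + 1) + t * genFib s t n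

lemma genFib_binet (s t φ φ' : ℝ) (h1 : φ + φ' = s) (h2 : φ * φ' = -t) :
    ∀ n, genFib s t n * (φ - φ') = φ ^ n - φ' ^ n := by
  intro n
  induction n using Nat.twoStepInduction with
  | zero => simp [genFib]
  | one => simp [genFib]
  | more n ih1 ih2 =>
    show (s * genFib s t (n + 1) + t * genFib s t n) * (φ - φ') = _
    have : s * (genFib s t (n+1) * (φ - φ')) + t * (genFib s t n * (φ - φ'))
        = s * (φ ^ (n+1) - φ' ^ (n+1)) + t * (φ ^ n - φ' ^ n) := by rw [ih1, ih2]
    have hst : (φ + φ') * (φ ^ (n+1) - φ' ^ (n+1)) + (-(φ * φ')) * (φ ^ n - φ' ^ n)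
        = φ ^ (n+2) - φ' ^ (n+2) := by ring
    calc (s * genFib s t (n + 1) + t * genFib s t n) * (φ - φ')
        = s * (genFib s t (n+1) * (φ - φ')) + t * (genFib s t n * (φ - φ')) := by ring
      _ = s * (φ ^ (n+1) - φ' ^ (n+1)) + t * (φ ^ n - φ' ^ n) := this
      _ = (φ + φ') * (φ ^ (n+1) - φ' ^ (n+1)) + (-(φ * φ')) * (φ ^ n - φ' ^ n) := by
          rw [h1, h2]; ring
      _ = φ ^ (n+2) - φ' ^ (n+2) := hst

/-- For 0 < |q| < 1: u^{n−1}{n}_{s,t} → 0 if 0 ≤ u < 1/φ, and → 1/(1−q) if u = 1/φ. -/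
theorem deformed_genFib_limit (s t : ℝ) (hs : s ≠ 0) (hd : 0 < s ^ 2 + 4 * t)
    (φ φ' q : ℝ)
    (hφ : φ = (s + Real.sqrt (s ^ 2 + 4 * t)) / 2)
    (hφ' : φ' = (s - Real.sqrt (s ^ 2 + 4 * t)) / 2)
    (hq : q = φ' / φ) (hq0 : 0 < |q|) (hq1 : |q| < 1) :
    (∀ u : ℝ, 0 ≤ u → u < 1 / φ →
      Tendsto (fun n : ℕ => u ^ (n - 1) * genFib s t n) atTop (nhds 0)) ∧
    Tendsto (fun n : ℕ => (1 / φ) ^ (n - 1) * genFib s t n) atTop (nhds (1 / (1 - q))) := by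
  set D := s ^ 2 + 4 * t with hD
  have hsq : Real.sqrt D ^ 2 = D := Real.sq_sqrt hd.le
  have hsqpos : 0 < Real.sqrt D := Real.sqrt_pos.mpr hd
  have hsub : φ - φ' = Real.sqrt D := by rw [hφ, hφ']; ring
  have h1 : φ + φ' = s := by rw [hφ, hφ']; ring
  have h2 : φ * φ' = -t := by
    rw [hφ, hφ']
    have : (s + Real.sqrt D) / 2 * ((s - Real.sqrt D) / 2)
        = (s ^ 2 - Real.sqrt D ^ 2) / 4 := by ring
    rw [this, hsq]; ring
  have hφne : φ ≠ 0 := by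
    intro h
    rw [hq, h, div_zero, abs_zero] at hq0
    exact lt_irrefl _ hq0
  have hφpos : 0 < φ := by
    rcases lt_or_gt_of_ne hφne with h | h
    · exfalso
      have hφ'lt : φ' < φ := by
        have := hsub; nlinarith
      have : |φ'| < |φ| := by
        rw [hq, abs_div] at hq1
        have hφabs : 0 < |φ| := abs_pos.mpr hφne
        exact (div_lt_one hφabs).mp hq1
      rw [abs_of_neg h, abs_of_neg (hφ'lt.trans h)] at this
      linarith
    · exact h
  have habsφ' : |φ'| = |q| * φ := by
    rw [hq, abs_div, abs_of_pos hφpos]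
    field_simp
  have hbinet : ∀ n, genFib s t n = (φ ^ n - φ' ^ n) / Real.sqrt D := by
    intro n
    have := genFib_binet s t φ φ' h1 h2 n
    rw [hsub] at this
    field_simp [hsqpos.ne'] at this ⊢
    linarith [this]
  constructor
  · intro u hu0 hu1
    have huφ : u * φ < 1 := by
      rw [lt_div_iff₀ hφpos] at hu1; linarith
    have huφ0 : 0 ≤ u * φ := mul_nonneg hu0 hφpos.le
    have huφ' : |u * φ'| < 1 := by
      rw [abs_mul, abs_of_nonneg hu0, habsφ']
      calc u * (|q| * φ) = |q| * (u * φ) := by ring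
        _ ≤ 1 * (u * φ) := by
            apply mul_le_mul_of_nonneg_right hq1.le huφ0
        _ < 1 := by linarith
    have t1 : Tendsto (fun n : ℕ => (u * φ) ^ (n - 1)) atTop (nhds 0) :=
      (tendsto_pow_atTop_nhds_zero_of_abs_lt_one (by rw [abs_of_nonneg huφ0]; exact huφ)).comp
        (tendsto_sub_atTop_nat 1)
    have t2 : Tendsto (fun n : ℕ => (u * φ') ^ (n - 1)) atTop (nhds 0) :=
      (tendsto_pow_atTop_nhds_zero_of_abs_lt_one huφ').comp (tendsto_sub_atTop_nat 1)
    have key : Tendsto (fun n : ℕ =>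
        ((u * φ) ^ (n - 1) * φ - (u * φ') ^ (n - 1) * φ') / Real.sqrt D) atTop (nhds 0) := by
      have := ((t1.mul_const φ).sub (t2.mul_const φ')).div_const (Real.sqrt D)
      simpa using this
    refine key.congr' ?_
    filter_upwards [eventually_ge_atTop 1] with n hn
    obtain ⟨m, rfl⟩ : ∃ m, n = m + 1 := ⟨n - 1, by omega⟩
    rw [hbinet]
    simp only [Nat.add_sub_cancel]
    field_simp
    ring
  · have hq' : |q| < 1 := hq1
    have t2 : Tendsto (fun n : ℕ => q ^ (n - 1)) atTop (nhds 0) :=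
      (tendsto_pow_atTop_nhds_zero_of_abs_lt_one hq').comp (tendsto_sub_atTop_nat 1)
    have key : Tendsto (fun n : ℕ => (φ - q ^ (n - 1) * φ') / Real.sqrt D) atTop
        (nhds (φ / Real.sqrt D)) := by
      have := ((tendsto_const_nhds (x := φ) (f := atTop)).sub (t2.mul_const φ')).div_const
        (Real.sqrt D)
      simpa using this
    have hlim : φ / Real.sqrt D = 1 / (1 - q) := by
      have h1q : 1 - q = Real.sqrt D / φ := by
        rw [hq, ← hsub]; field_simp
      rw [h1q]
      field_simp
    rw [← hlim]
    refine key.congr' ?_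
    filter_upwards [eventually_ge_atTop 1] with n hn
    obtain ⟨m, rfl⟩ : ∃ m, n = m + 1 := ⟨n - 1, by omega⟩
    rw [hbinet, hq]
    simp only [Nat.add_sub_cancel]
    rw [div_pow, div_pow]
    field_simp
    ring
end

section
/- For nonzero scalars u, v and t ≠ 0, the deformed exponential functions satisfy exp_{vs,v²t}(z,u) = exp_{s,t}(z, u/v); in particular exp_{us,u²t}(z,u) = exp_{s,t}(z,1). -/
/-- The (s,t)-fibotorial {n}_{s,t}! = {1}{2}⋯{n}, with {0}! = 1. -/
def fibotorial (s t : ℝ) (n : ℕ) : ℝ := ∏ k ∈ Finset.range n, genFib s t (k + 1)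

lemma genFib_scale (s t v : ℝ) : ∀ n : ℕ,
    genFib (v * s) (v ^ 2 * t) n = v ^ (n - 1) * genFib s t n
  | 0 => by simp [genFib]
  | 1 => by simp [genFib]
  | n + 2 => by
    simp only [genFib, genFib_scale s t v (n + 1), genFib_scale s t v n,
      Nat.add_sub_cancel]
    cases n with
    | zero => simp [genFib]
    | succ m =>
      simp only [Nat.add_sub_cancel]
      rw [show m + 1 + 2 - 1 = m + 2 from rfl, show v ^ (m + 2) = v ^ 2 * v ^ m from by ring]
      ring

lemma fibotorial_scale (s t v : ℝ) (n : ℕ) :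
    fibotorial (v * s) (v ^ 2 * t) n = v ^ (n.choose 2) * fibotorial s t n := by
  induction n with
  | zero => simp [fibotorial]
  | succ m ih =>
    have h : ∀ a b : ℝ, fibotorial a b (m + 1) = fibotorial a b m * genFib a b (m + 1) :=
      fun a b => Finset.prod_range_succ _ _
    rw [h, h, ih, genFib_scale, Nat.add_sub_cancel,
      Nat.choose_succ_succ, Nat.choose_one_right, pow_add]
    ring

/-- The deformed (s,t)-exponential function exp_{s,t}(z,u) = Σ u^{C(n,2)} zⁿ/{n}_{s,t}!. -/
noncomputable def expST (s t u : ℝ) (z : ℝ) : ℝ :=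
  ∑' n : ℕ, u ^ (n.choose 2) * z ^ n / fibotorial s t n

lemma expST_scale (s t u v : ℝ) (hv : v ≠ 0) (hf : ∀ n : ℕ, fibotorial s t n ≠ 0) (z : ℝ) :
    expST (v * s) (v ^ 2 * t) u z = expST s t (u / v) z := by
  unfold expST
  refine tsum_congr fun n => ?_
  rw [fibotorial_scale, div_pow]
  have hvn : (v : ℝ) ^ (n.choose 2) ≠ 0 := pow_ne_zero _ hv
  field_simp

/-- exp_{vs,v²t}(z,u) = exp_{s,t}(z,u/v); in particular exp_{us,u²t}(z,u) = exp_{s,t}(z,1). -/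
theorem deformed_exp_rescale (s t u v : ℝ) (hu : u ≠ 0) (hv : v ≠ 0) (ht : t ≠ 0)
    (hf : ∀ n : ℕ, fibotorial s t n ≠ 0) (z : ℝ) :
    expST (v * s) (v ^ 2 * t) u z = expST s t (u / v) z ∧
    expST (u * s) (u ^ 2 * t) u z = expST s t 1 z := by
  refine ⟨expST_scale s t u v hv hf z, ?_⟩
  rw [expST_scale s t u u hu hf z, div_self hu]
end

section
/- For s ≠ 0, s² + 4t > 0, q = φ'/φ ≠ 1: Exp_{s,t}(z)·Exp'_{s,t}(−z) = 1, where Exp_{s,t}(z) = Σ φ^{C(n,2)} z^n/{n}_{s,t}! and Exp'_{s,t}(z) = Σ φ'^{C(n,2)} z^n/{n}_{s,t}!, on the common domain of convergence. -/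
lemma genFib_closed (s t φ φ' : ℝ) (h : φ + φ' = s) (h2 : φ * φ' = -t) (n : ℕ) :
    (φ - φ') * genFib s t n = φ ^ n - φ' ^ n := by
  induction n using Nat.twoStepInduction with
  | zero => simp [genFib]
  | one => simp [genFib]
  | more n ih0 ih1 =>
      show (φ - φ') * (s * genFib s t (n+1) + t * genFib s t n) = _
      linear_combination s * ih1 + t * ih0 - (φ^(n+1) - φ'^(n+1)) * h + (φ^n - φ'^n) * h2

lemma genFib_ne (s t φ φ' : ℝ) (h : φ + φ' = s) (h2 : φ * φ' = -t)
    (hne : φ ≠ φ') (hne' : φ ≠ -φ') : ∀ m, 1 ≤ m → genFib s t m ≠ 0 := by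
  intro m hm hzero
  have hc := genFib_closed s t φ φ' h h2 m
  rw [hzero, mul_zero] at hc
  have hpow : φ ^ m = φ' ^ m := by linarith
  have habs : |φ| = |φ'| := by
    rcases lt_trichotomy |φ| |φ'| with hlt | heq | hlt
    · have := pow_lt_pow_left₀ hlt (abs_nonneg _) (by omega : m ≠ 0)
      rw [← abs_pow, ← abs_pow, hpow] at this; exact absurd this (lt_irrefl _)
    · exact heq
    · have := pow_lt_pow_left₀ hlt (abs_nonneg _) (by omega : m ≠ 0)
      rw [← abs_pow, ← abs_pow, hpow] at this; exact absurd this (lt_irrefl _)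
  rcases abs_eq_abs.mp habs with h' | h'
  · exact hne h'
  · exact hne' h'

lemma genFib_split (s t φ φ' : ℝ) (h : φ + φ' = s) (h2 : φ * φ' = -t)
    (hne : φ ≠ φ') (k m : ℕ) :
    genFib s t (k + m) = φ ^ k * genFib s t m + φ' ^ m * genFib s t k := by
  have hΔ : φ - φ' ≠ 0 := sub_ne_zero.mpr hne
  apply mul_left_cancel₀ hΔ
  have c1 := genFib_closed s t φ φ' h h2 (k + m)
  have c2 := genFib_closed s t φ φ' h h2 m
  have c3 := genFib_closed s t φ φ' h h2 k
  rw [pow_add] at c1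
  linear_combination c1 + φ ^ k * c2.symm + φ' ^ m * c3.symm

lemma fibotorial_succ (s t : ℝ) (n : ℕ) :
    fibotorial s t (n + 1) = fibotorial s t n * genFib s t (n + 1) :=
  Finset.prod_range_succ _ _

lemma fibotorial_ne (s t : ℝ) (hg : ∀ m, 1 ≤ m → genFib s t m ≠ 0) (n : ℕ) :
    fibotorial s t n ≠ 0 := by
  induction n with
  | zero => simp [fibotorial]
  | succ n ih => rw [fibotorial_succ]; exact mul_ne_zero ih (hg (n+1) (by omega))

lemma choose_two_succ (j : ℕ) : (j + 2).choose 2 = (j + 1).choose 2 + (j + 1) := by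
  have h : (j + 2).choose 2 = (j + 1).choose 1 + (j + 1).choose 2 :=
    Nat.choose_succ_succ _ _
  rw [Nat.choose_one_right] at h
  omega

lemma coeff_zero (s t φ φ' : ℝ) (h : φ + φ' = s) (h2 : φ * φ' = -t)
    (hne : φ ≠ φ') (hne' : φ ≠ -φ') (z : ℝ) (N : ℕ) :
    ∑ k ∈ Finset.range (N + 2),
      (φ ^ (k.choose 2) * z ^ k / fibotorial s t k) *
        (φ' ^ ((N + 1 - k).choose 2) * (-z) ^ (N + 1 - k) / fibotorial s t (N + 1 - k)) = 0 := by
  have hg := genFib_ne s t φ φ' h h2 hne hne'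
  have hF := fibotorial_ne s t hg
  set F := fibotorial s t with hFdef
  set G := genFib s t with hGdef
  have hGN : G (N + 1) ≠ 0 := hg (N + 1) (by omega)
  set A : ℕ → ℝ := fun j =>
    φ ^ ((j + 1).choose 2) * φ' ^ ((N + 1 - j).choose 2) / (F j * F (N - j)) with hA
  set T : ℕ → ℝ := fun k =>
    if 1 ≤ k ∧ k ≤ N + 1 then (-1 : ℝ) ^ (N + 1 - k) * z ^ (N + 1) * A (k - 1) else 0 with hT
  suffices hmul : G (N+1) * ∑ k ∈ Finset.range (N + 2),
      (φ ^ (k.choose 2) * z ^ k / F k) *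
        (φ' ^ ((N + 1 - k).choose 2) * (-z) ^ (N + 1 - k) / F (N + 1 - k)) = 0 by
    rcases mul_eq_zero.mp hmul with h' | h'
    · exact absurd h' hGN
    · exact h'
  rw [Finset.mul_sum]
  have key : ∀ k ∈ Finset.range (N + 2),
      G (N+1) * ((φ ^ (k.choose 2) * z ^ k / F k) *
        (φ' ^ ((N + 1 - k).choose 2) * (-z) ^ (N + 1 - k) / F (N + 1 - k))) = T k - T (k + 1) := by
    intro k hk
    rw [Finset.mem_range] at hk
    rcases Nat.eq_zero_or_pos k with rfl | hk1
    · -- k = 0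
      have hT0 : T 0 = 0 := by simp [hT]
      have hT1 : T 1 = (-1 : ℝ) ^ N * z ^ (N + 1) * A 0 := by
        simp only [hT]; rw [if_pos ⟨le_refl 1, by omega⟩]; norm_num
      rw [hT0, hT1, hA]
      simp only [Nat.choose_self, Nat.sub_zero]
      have hF0 : F 0 = 1 := by simp [hFdef, fibotorial]
      have hFN1 : F (N + 1) = F N * G (N + 1) := fibotorial_succ s t N
      rw [hFN1, hF0]
      have hz : (-z) ^ (N + 1) = -((-1:ℝ)^N * z^(N+1)) := by
        rw [neg_pow, pow_succ]; ring
      rw [hz]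
      have h1 : (Nat.choose 0 2) = 0 := rfl
      have h12 : (Nat.choose 1 2) = 0 := rfl
      rw [h1, h12]
      have hGN2 : G (1 + N) ≠ 0 := by rwa [Nat.add_comm]
      have hFN : F N ≠ 0 := hF N
      field_simp
      ring
    · rcases Nat.lt_or_ge k (N + 1) with hk2 | hk2
      · -- 1 ≤ k ≤ N
        obtain ⟨j, rfl⟩ : ∃ j, k = j + 1 := ⟨k - 1, by omega⟩
        obtain ⟨p, hN⟩ : ∃ p, N = j + p + 1 := ⟨N - j - 1, by omega⟩
        subst hN
        have hTk : T (j + 1) = (-1:ℝ) ^ (p + 1) * z ^ (j + p + 2) *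
            (φ ^ ((j + 1).choose 2) * φ' ^ ((p + 2).choose 2) / (F j * F (p + 1))) := by
          simp only [hT]
          rw [if_pos ⟨by omega, by omega⟩]
          have e1 : j + 1 - 1 = j := by omega
          have e2 : j + p + 1 + 1 - (j + 1) = p + 1 := by omega
          have e3 : j + p + 1 + 1 - j = p + 2 := by omega
          have e4 : j + p + 1 - j = p + 1 := by omega
          rw [e1, e2]
          simp only [hA, e3, e4]
          try ring_nf
        have hTk1 : T (j + 2) = (-1:ℝ) ^ p * z ^ (j + p + 2) *
            (φ ^ ((j + 2).choose 2) * φ' ^ ((p + 1).choose 2) / (F (j + 1) * F p)) := by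
          simp only [hT]
          rw [if_pos ⟨by omega, by omega⟩]
          have e1 : j + 2 - 1 = j + 1 := by omega
          have e2 : j + p + 1 + 1 - (j + 2) = p := by omega
          have e3 : j + p + 1 + 1 - (j + 1) = p + 1 := by omega
          have e4 : j + p + 1 - (j + 1) = p := by omega
          rw [e1, e2]
          simp only [hA, e3, e4]
          try ring_nf
        have e5 : j + p + 1 + 1 - (j + 1) = p + 1 := by omega
        rw [hTk, hTk1, e5]
        have hsplit : G (j + p + 2) = φ ^ (j + 1) * G (p + 1) + φ' ^ (p + 1) * G (j + 1) := by
          have := genFib_split s t φ φ' h h2 hne (j + 1) (p + 1)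
          rw [show j + 1 + (p + 1) = j + p + 2 from by omega] at this
          exact this
        have hGN' : G (j + p + 1 + 1) = G (j + p + 2) := by norm_num
        rw [hGN', hsplit]
        have hFj : F (j + 1) = F j * G (j + 1) := fibotorial_succ s t j
        have hFp : F (p + 1) = F p * G (p + 1) := fibotorial_succ s t p
        have hc1 : φ ^ ((j + 2).choose 2) = φ ^ ((j + 1).choose 2) * φ ^ (j + 1) := by
          rw [choose_two_succ, pow_add]
        have hc2 : φ' ^ ((p + 2).choose 2) = φ' ^ ((p + 1).choose 2) * φ' ^ (p + 1) := by
          rw [choose_two_succ, pow_add]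
        have hz : (-z) ^ (p + 1) = -((-1:ℝ)^p * z^(p+1)) := by
          rw [neg_pow, pow_succ]; ring
        rw [hFj, hFp, hc1, hc2, hz]
        have hzz : z ^ (j + p + 2) = z ^ (j + 1) * z ^ (p + 1) := by
          rw [← pow_add]; ring_nf
        rw [hzz]
        have hFjne := hF j
        have hFpne := hF p
        have hGj : G (j + 1) ≠ 0 := hg _ (by omega)
        have hGp : G (p + 1) ≠ 0 := hg _ (by omega)
        field_simp
        ring
      · -- k = N + 1
        have hkN : k = N + 1 := by omega
        subst hkN
        have hTk : T (N + 1) = z ^ (N + 1) * A N := by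
          simp only [hT]
          rw [if_pos ⟨by omega, le_refl _⟩]
          norm_num
        have hTk1 : T (N + 2) = 0 := by
          simp only [hT]
          rw [if_neg (by omega)]
        rw [hTk, hTk1, hA]
        simp only [Nat.sub_self]
        have hF0 : F 0 = 1 := by simp [hFdef, fibotorial]
        have hFN1 : F (N + 1) = F N * G (N + 1) := fibotorial_succ s t N
        have e1 : N + 1 - N = 1 := by omega
        rw [e1, hFN1, hF0]
        have h1 : (Nat.choose 0 2) = 0 := rfl
        have h12 : (Nat.choose 1 2) = 0 := rfl
        rw [h1, h12]
        have hGN2 : G (1 + N) ≠ 0 := by rwa [Nat.add_comm]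
        have hFN : F N ≠ 0 := hF N
        field_simp
        ring
  rw [Finset.sum_congr rfl key, Finset.sum_range_sub']
  have hT0 : T 0 = 0 := by simp [hT]
  have hTN2 : T (N + 2) = 0 := by simp only [hT]; rw [if_neg (by omega)]
  rw [hT0, hTN2, sub_zero]

/-- Exp_{s,t}(z)·Exp'_{s,t}(−z) = 1 on the common domain of convergence, where
Exp_{s,t}(z) = Σ φ^{C(n,2)} zⁿ/{n}! and Exp'_{s,t}(z) = Σ φ'^{C(n,2)} zⁿ/{n}!. -/
theorem ExpST_mul_ExpST'_eq_one (s t : ℝ) (hs : s ≠ 0) (hd : 0 < s ^ 2 + 4 * t)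
    (φ φ' q : ℝ)
    (hφ : φ = (s + Real.sqrt (s ^ 2 + 4 * t)) / 2)
    (hφ' : φ' = (s - Real.sqrt (s ^ 2 + 4 * t)) / 2)
    (hq : q = φ' / φ) (hqne : q ≠ 1) (z : ℝ)
    (h1 : Summable (fun n : ℕ => φ ^ (n.choose 2) * z ^ n / fibotorial s t n))
    (h2 : Summable (fun n : ℕ => φ' ^ (n.choose 2) * (-z) ^ n / fibotorial s t n)) :
    (∑' n : ℕ, φ ^ (n.choose 2) * z ^ n / fibotorial s t n) *
      (∑' n : ℕ, φ' ^ (n.choose 2) * (-z) ^ n / fibotorial s t n) = 1 := by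
  have hD : Real.sqrt (s ^ 2 + 4 * t) > 0 := Real.sqrt_pos.mpr hd
  have hDsq : Real.sqrt (s ^ 2 + 4 * t) ^ 2 = s ^ 2 + 4 * t := Real.sq_sqrt hd.le
  have hsum : φ + φ' = s := by rw [hφ, hφ']; ring
  have hprod : φ * φ' = -t := by rw [hφ, hφ']; nlinarith [hDsq]
  have hne : φ ≠ φ' := by
    rw [hφ, hφ']; intro hcon
    have : Real.sqrt (s ^ 2 + 4 * t) = 0 := by linarith
    linarith
  have hne' : φ ≠ -φ' := by
    intro hcon
    apply hs
    rw [← hsum, hcon]; ring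
  have hf' : Summable fun n => ‖φ ^ (n.choose 2) * z ^ n / fibotorial s t n‖ := by
    simpa only [Real.norm_eq_abs] using h1.abs
  have hg' : Summable fun n => ‖φ' ^ (n.choose 2) * (-z) ^ n / fibotorial s t n‖ := by
    simpa only [Real.norm_eq_abs] using h2.abs
  rw [tsum_mul_tsum_eq_tsum_sum_range_of_summable_norm hf' hg']
  have hcoeff : ∀ n : ℕ, (∑ k ∈ Finset.range (n + 1),
      (φ ^ (k.choose 2) * z ^ k / fibotorial s t k) *
        (φ' ^ ((n - k).choose 2) * (-z) ^ (n - k) / fibotorial s t (n - k)))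
      = if n = 0 then 1 else 0 := by
    intro n
    rcases Nat.eq_zero_or_pos n with rfl | hn
    · simp [fibotorial]
    · obtain ⟨N, rfl⟩ : ∃ N, n = N + 1 := ⟨n - 1, by omega⟩
      rw [if_neg (by omega)]
      exact coeff_zero s t φ φ' hsum hprod hne hne' z N
  rw [tsum_congr hcoeff]
  rw [tsum_eq_single 0 (fun n hn => by simp [hn])]
  simp
end

section
/- Let s ≠ 0, s²+4t > 0, q = φ'/φ with |q| < 1, and x > 0. Then Exp'_{s,t}(x) < e^x, where Exp'_{s,t}(x) = Π_{k=0}^∞ (1 + x(1−q)q^k); and if moreover 0 < x < 1/(1−q), then e^x < Exp_{s,t}(x) = Π_{k=0}^∞ (1 − (1−q)q^k x)^{-1}. -/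
/-!
With `yₖ = x (1 - q) qᵏ`, resp. `yₖ = -(1 - q) qᵏ x`, the first product is `∏ (1 + yₖ)` and the
second is its reciprocal; the weights `(1 - q) qᵏ` sum to `1`, so `∑ yₖ = ±x`. Writing
`∏ (1 + yₖ) = exp (∑ log (1 + yₖ))`, both bounds follow from the strict termwise inequality
`log (1 + y) < y` for `-1 < y ≠ 0` (i.e. `1 + y < eʸ`).
-/

open Real

section OneAddProduct

variable {ι : Type*} {f : ι → ℝ} {a : ℝ}

theorem tprod_one_add_eq_exp_tsum_log (hf : Summable f) (hf1 : ∀ i, -1 < f i) :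
    ∏' i, (1 + f i) = rexp (∑' i, log (1 + f i)) :=
  (rexp_tsum_eq_tprod (fun i => by linarith [hf1 i]) (summable_log_one_add_of_summable hf)).symm

theorem log_one_add_lt_self {y : ℝ} (hy1 : -1 < y) (hy : y ≠ 0) : log (1 + y) < y := by
  simpa using log_lt_sub_one_of_pos (x := 1 + y) (by linarith) (by simpa using hy)

theorem tprod_one_add_lt_exp (hf : HasSum f a) (hf1 : ∀ i, -1 < f i) {i₀ : ι} (hi₀ : f i₀ ≠ 0) :
    ∏' i, (1 + f i) < rexp a := by
  rw [tprod_one_add_eq_exp_tsum_log hf.summable hf1, exp_lt_exp, ← hf.tsum_eq]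
  refine Summable.tsum_lt_tsum (i := i₀) (fun i => ?_) (log_one_add_lt_self (hf1 i₀) hi₀)
    (summable_log_one_add_of_summable hf.summable) hf.summable
  simpa using log_le_sub_one_of_pos (by linarith [hf1 i] : 0 < 1 + f i)

theorem exp_neg_lt_tprod_inv_one_add (hf : HasSum f a) (hf1 : ∀ i, -1 < f i) {i₀ : ι}
    (hi₀ : f i₀ ≠ 0) : rexp (-a) < ∏' i, (1 + f i)⁻¹ := by
  have hpos : 0 < ∏' i, (1 + f i) := by
    rw [tprod_one_add_eq_exp_tsum_log hf.summable hf1]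
    exact exp_pos _
  rw [(Real.multipliable_one_add_of_summable hf.summable).tprod_inv₀ hpos.ne', exp_neg]
  exact inv_strictAnti₀ hpos (tprod_one_add_lt_exp hf hf1 hi₀)

end OneAddProduct

theorem hasSum_one_sub_mul_geometric {q : ℝ} (hq0 : 0 ≤ q) (hq1 : q < 1) :
    HasSum (fun k : ℕ => (1 - q) * q ^ k) 1 := by
  simpa [(sub_pos.2 hq1).ne'] using (hasSum_geometric_of_lt_one hq0 hq1).mul_left (1 - q)

theorem ExpST_product_bounds_general (q : ℝ) (hq0 : 0 < q) (hq1 : q < 1)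
    (x : ℝ) (hx : 0 < x) :
    (∏' k : ℕ, (1 + x * (1 - q) * q ^ k)) < Real.exp x ∧
    (x < 1 / (1 - q) →
      Real.exp x < ∏' k : ℕ, (1 - (1 - q) * q ^ k * x)⁻¹) := by
  have hw := hasSum_one_sub_mul_geometric hq0.le hq1
  have hq1' : 0 < 1 - q := sub_pos.2 hq1
  refine ⟨?_, fun hx1 => ?_⟩
  · refine tprod_one_add_lt_exp (i₀ := 0) (by simpa [mul_assoc] using hw.mul_left x)
      (fun k => ?_) (by positivity)
    linarith [show 0 < x * (1 - q) * q ^ k by positivity]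
  · have hx1' : (1 - q) * x < 1 := by rwa [lt_div_iff₀ hq1', mul_comm] at hx1
    have hfactor_lt (k : ℕ) : (1 - q) * q ^ k * x < 1 := by
      have hqk : q ^ k ≤ 1 := pow_le_one₀ hq0.le hq1.le
      nlinarith [mul_nonneg (mul_nonneg hq1'.le hx.le) (sub_nonneg.2 hqk)]
    simpa [sub_eq_add_neg] using exp_neg_lt_tprod_inv_one_add (i₀ := 0) (hw.mul_right x).neg
      (fun k => by linarith [hfactor_lt k]) (neg_ne_zero.2 (by positivity))

/-- Bounds for the (s,t)-exponential infinite products: for 0 < q < 1 and x > 0,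
Exp'_{s,t}(x) = Π (1 + x(1−q)qᵏ) < eˣ, and if moreover x < 1/(1−q) then
eˣ < Exp_{s,t}(x) = Π (1 − (1−q)qᵏx)⁻¹. -/
theorem ExpST_product_bounds (s t : ℝ) (hs : s ≠ 0) (hd : 0 < s ^ 2 + 4 * t)
    (φ φ' q : ℝ)
    (hφ : φ = (s + Real.sqrt (s ^ 2 + 4 * t)) / 2)
    (hφ' : φ' = (s - Real.sqrt (s ^ 2 + 4 * t)) / 2)
    (hq : q = φ' / φ) (hq0 : 0 < q) (hq1 : q < 1)
    (x : ℝ) (hx : 0 < x) :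
    (∏' k : ℕ, (1 + x * (1 - q) * q ^ k)) < Real.exp x ∧
    (x < 1 / (1 - q) →
      Real.exp x < ∏' k : ℕ, (1 - (1 - q) * q ^ k * x)⁻¹) :=
  ExpST_product_bounds_general q hq0 hq1 x hx
end

section
/- Let 0 < |q| < 1, a, b scalars, and define E_q(a,b;z) = Σ_{n≥0} (Π_{i=0}^{n−1}(a + b q^i)) z^n/[n]_q!. Then E_q(a,b;z) satisfies E_q(a,b;z) = E_q(a,b;qz)·(1 + b(1−q)z)/(1 − a(1−q)z) wherever defined, and hence E_q(a,b;z)·E_q(b,a;−z) = 1 on the common domain of convergence. -/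
/-! Comparing coefficients, `(1 - qⁿ⁺¹) tₙ₊₁ = (1 - q)(a + b qⁿ) z tₙ` for the terms `tₙ` of
`E_q(a,b;z)`; summed over `n` this is the q-difference equation
`E(z) - E(qz) = a(1-q)z E(z) + b(1-q)z E(qz)`, i.e. the functional equation. Writing the
equation for `E_q(b,a;-z)` as well, the product `P(z) = E_q(a,b;z) E_q(b,a;-z)` satisfies
`P(z) = P(qz)` (when `a + b = 0` both factors are `1`). Hence `P(z) = P(qⁿz) → 1`,
since `|E(cz) - 1| ≤ |c| ∑ |tₙ|` for `|c| ≤ 1`. -/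

/-- The q-factorial [n]_q! = Π_{k=1}^n (1−qᵏ)/(1−q). -/
noncomputable def qFactorial (q : ℝ) (n : ℕ) : ℝ :=
  ∏ k ∈ Finset.range n, (1 - q ^ (k + 1)) / (1 - q)

/-- E_q(a,b;z) = Σ (Π_{i<n}(a + b qⁱ)) zⁿ/[n]_q!, the solution of the q-pantograph
equation D_q y = a y(x) + b y(qx), y(0) = 1. -/
noncomputable def Eq' (q a b z : ℝ) : ℝ :=
  ∑' n : ℕ, (∏ i ∈ Finset.range n, (a + b * q ^ i)) * z ^ n / qFactorial q n

open Filter Topology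

noncomputable def qTerm (q a b z : ℝ) (n : ℕ) : ℝ :=
  (∏ i ∈ Finset.range n, (a + b * q ^ i)) * z ^ n / qFactorial q n

lemma Eq'_eq_tsum (q a b z : ℝ) : Eq' q a b z = ∑' n, qTerm q a b z n := rfl

section

variable {q : ℝ}

lemma one_sub_pow_ne_zero_of_abs_lt_one (hq : |q| < 1) {k : ℕ} (hk : k ≠ 0) :
    1 - q ^ k ≠ 0 := by
  rw [sub_ne_zero]
  intro h
  have := pow_lt_one₀ (abs_nonneg q) hq hk
  rw [← abs_pow, ← h, abs_one] at this
  exact this.false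

lemma one_sub_ne_zero_of_abs_lt_one (hq : |q| < 1) : 1 - q ≠ 0 :=
  (sub_pos.mpr (lt_of_abs_lt hq)).ne'

lemma qFactorial_succ (n : ℕ) :
    qFactorial q (n + 1) = qFactorial q n * ((1 - q ^ (n + 1)) / (1 - q)) :=
  Finset.prod_range_succ _ _

lemma qFactorial_ne_zero (hq : |q| < 1) (n : ℕ) : qFactorial q n ≠ 0 :=
  Finset.prod_ne_zero_iff.mpr fun k _ =>
    div_ne_zero (one_sub_pow_ne_zero_of_abs_lt_one hq k.succ_ne_zero)
      (one_sub_ne_zero_of_abs_lt_one hq)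

@[simp]
lemma qTerm_zero (a b z : ℝ) : qTerm q a b z 0 = 1 := by
  simp [qTerm, qFactorial]

lemma qTerm_mul_left (a b c z : ℝ) (n : ℕ) :
    qTerm q a b (c * z) n = c ^ n * qTerm q a b z n := by
  simp only [qTerm, mul_pow]
  ring

lemma one_sub_pow_mul_qTerm_succ (hq : |q| < 1) (a b z : ℝ) (n : ℕ) :
    (1 - q ^ (n + 1)) * qTerm q a b z (n + 1)
      = (1 - q) * (a + b * q ^ n) * z * qTerm q a b z n := by
  have hfac := qFactorial_ne_zero hq n
  have hq1 := one_sub_ne_zero_of_abs_lt_one hq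
  have hqn := one_sub_pow_ne_zero_of_abs_lt_one hq n.succ_ne_zero
  simp only [qTerm, Finset.prod_range_succ, qFactorial_succ, pow_succ] at hqn ⊢
  field_simp

variable {a b : ℝ}

lemma summable_qTerm_mul {c z : ℝ} (hc : |c| ≤ 1) (h : Summable (qTerm q a b z)) :
    Summable (qTerm q a b (c * z)) := by
  refine .of_norm_bounded h.abs fun n => ?_
  rw [qTerm_mul_left, Real.norm_eq_abs, abs_mul, abs_pow]
  exact mul_le_of_le_one_left (abs_nonneg _) (pow_le_one₀ (abs_nonneg c) hc)

lemma Eq'_sub_Eq'_mul (hq : |q| < 1) {z : ℝ} (h : Summable (qTerm q a b z)) :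
    Eq' q a b z - Eq' q a b (q * z)
      = a * (1 - q) * z * Eq' q a b z + b * (1 - q) * z * Eq' q a b (q * z) := by
  have hqz := summable_qTerm_mul hq.le h
  have hdiff : HasSum (fun n => qTerm q a b z n - qTerm q a b (q * z) n)
      (Eq' q a b z - Eq' q a b (q * z)) := h.hasSum.sub hqz.hasSum
  rw [← hasSum_nat_add_iff' 1] at hdiff
  have hshift : HasSum (fun n => qTerm q a b z (n + 1) - qTerm q a b (q * z) (n + 1))
      (a * (1 - q) * z * Eq' q a b z + b * (1 - q) * z * Eq' q a b (q * z)) := by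
    refine ((h.hasSum.mul_left (a * (1 - q) * z)).add
      (hqz.hasSum.mul_left (b * (1 - q) * z))).congr_fun fun n => ?_
    rw [qTerm_mul_left a b q z (n + 1), qTerm_mul_left a b q z n]
    linear_combination one_sub_pow_mul_qTerm_succ hq a b z n
  simpa using hdiff.unique hshift

lemma Eq'_mul_one_sub (hq : |q| < 1) {z : ℝ} (h : Summable (qTerm q a b z)) :
    Eq' q a b z * (1 - a * (1 - q) * z) = Eq' q a b (q * z) * (1 + b * (1 - q) * z) := by
  linear_combination Eq'_sub_Eq'_mul hq h

lemma Eq'_eq_one_of_add_eq_zero (hab : a + b = 0) (z : ℝ) : Eq' q a b z = 1 := by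
  rw [Eq'_eq_tsum, tsum_eq_single 0 fun n hn => ?_, qTerm_zero]
  have hfactor : a + b * q ^ 0 = 0 := by simpa using hab
  simp [qTerm, Finset.prod_eq_zero (f := fun i => a + b * q ^ i)
    (Finset.mem_range.mpr (Nat.pos_of_ne_zero hn)) hfactor]

lemma Eq'_mul_Eq'_neg_of_mul (hq : |q| < 1) {w : ℝ} (hf : Summable (qTerm q a b w))
    (hg : Summable (qTerm q b a (-w))) :
    Eq' q a b (q * w) * Eq' q b a (-(q * w)) = Eq' q a b w * Eq' q b a (-w) := by
  by_cases hab : a + b = 0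
  · simp only [Eq'_eq_one_of_add_eq_zero hab, Eq'_eq_one_of_add_eq_zero (b := a) (by linarith)]
  have hf_eq := Eq'_mul_one_sub hq hf
  have hg_eq := Eq'_mul_one_sub hq hg
  rw [mul_neg q w] at hg_eq
  -- the difference is killed by both `1 - a(1-q)w` and `1 + b(1-q)w`, which cannot vanish together
  have hD : (Eq' q a b w * Eq' q b a (-w) - Eq' q a b (q * w) * Eq' q b a (-(q * w)))
      * ((a + b) * (1 - q)) = 0 := by
    linear_combination (b * (1 - q) * Eq' q b a (-w) + a * (1 - q) * Eq' q b a (-(q * w))) * hf_eq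
      + (b * (1 - q) * Eq' q a b (q * w) + a * (1 - q) * Eq' q a b w) * hg_eq
  linear_combination -(mul_eq_zero.mp hD).resolve_right
    (mul_ne_zero hab (one_sub_ne_zero_of_abs_lt_one hq))

lemma abs_Eq'_mul_sub_one_le {c z : ℝ} (hc : |c| ≤ 1) (h : Summable (qTerm q a b z)) :
    |Eq' q a b (c * z) - 1| ≤ |c| * ∑' n, |qTerm q a b z (n + 1)| := by
  have hcz := summable_qTerm_mul hc h
  have htail : Summable fun n => |qTerm q a b z (n + 1)| := (summable_nat_add_iff 1).mpr h.abs
  have hcz_tail : Summable fun n => |qTerm q a b (c * z) (n + 1)| :=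
    (summable_nat_add_iff 1).mpr hcz.abs
  rw [Eq'_eq_tsum, hcz.tsum_eq_zero_add, qTerm_zero, add_sub_cancel_left, ← tsum_mul_left]
  calc |∑' n, qTerm q a b (c * z) (n + 1)| ≤ ∑' n, |qTerm q a b (c * z) (n + 1)| := by
        simpa only [Real.norm_eq_abs] using
          norm_tsum_le_tsum_norm (f := fun n => qTerm q a b (c * z) (n + 1)) hcz_tail
    _ ≤ ∑' n, |c| * |qTerm q a b z (n + 1)| := by
        refine hcz_tail.tsum_le_tsum (fun n => ?_) (htail.mul_left _)
        rw [qTerm_mul_left, abs_mul, abs_pow]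
        exact mul_le_mul_of_nonneg_right (pow_le_of_le_one (abs_nonneg c) hc n.succ_ne_zero)
          (abs_nonneg _)

lemma tendsto_Eq'_pow_mul (hq : |q| < 1) {z : ℝ} (h : Summable (qTerm q a b z)) :
    Tendsto (fun n : ℕ => Eq' q a b (q ^ n * z)) atTop (𝓝 1) := by
  have hbound : Tendsto (fun n : ℕ => |q| ^ n * ∑' k, |qTerm q a b z (k + 1)|) atTop (𝓝 0) := by
    simpa using (tendsto_pow_atTop_nhds_zero_of_lt_one (abs_nonneg q) hq).mul_const _
  rw [tendsto_iff_norm_sub_tendsto_zero]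
  refine squeeze_zero (fun n => norm_nonneg _) (fun n => ?_) hbound
  rw [Real.norm_eq_abs, ← abs_pow]
  exact abs_Eq'_mul_sub_one_le (by simpa using pow_le_one₀ (abs_nonneg q) hq.le) h

lemma Eq'_mul_Eq'_neg_eq_one (hq : |q| < 1) {z : ℝ} (hf : Summable (qTerm q a b z))
    (hg : Summable (qTerm q b a (-z))) : Eq' q a b z * Eq' q b a (-z) = 1 := by
  have hpow_le : ∀ n : ℕ, |q ^ n| ≤ 1 := fun n => by
    simpa using pow_le_one₀ (abs_nonneg q) hq.le
  have horbit : ∀ n : ℕ,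
      Eq' q a b (q ^ n * z) * Eq' q b a (-(q ^ n * z)) = Eq' q a b z * Eq' q b a (-z) := by
    intro n
    induction n with
    | zero => simp
    | succ n ih =>
      have hg_n : Summable (qTerm q b a (-(q ^ n * z))) := by
        simpa only [mul_neg] using summable_qTerm_mul (hpow_le n) hg
      rw [pow_succ', mul_assoc, Eq'_mul_Eq'_neg_of_mul hq (summable_qTerm_mul (hpow_le n) hf) hg_n,
        ih]
  have hlim := (tendsto_Eq'_pow_mul hq hf).mul (tendsto_Eq'_pow_mul hq hg)
  simp only [mul_neg, mul_one, horbit] at hlim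
  exact tendsto_nhds_unique tendsto_const_nhds hlim

end

theorem Eq_functional_and_inverse_general (q a b : ℝ) (hq1 : |q| < 1) :
    (∀ z : ℝ,
      Summable (fun n : ℕ =>
        (∏ i ∈ Finset.range n, (a + b * q ^ i)) * z ^ n / qFactorial q n) →
      a * (1 - q) * z ≠ 1 →
      Eq' q a b z = Eq' q a b (q * z) * ((1 + b * (1 - q) * z) / (1 - a * (1 - q) * z))) ∧
    (∀ z : ℝ,
      Summable (fun n : ℕ =>
        (∏ i ∈ Finset.range n, (a + b * q ^ i)) * z ^ n / qFactorial q n) →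
      Summable (fun n : ℕ =>
        (∏ i ∈ Finset.range n, (b + a * q ^ i)) * (-z) ^ n / qFactorial q n) →
      Eq' q a b z * Eq' q b a (-z) = 1) := by
  refine ⟨fun z hf hne => ?_, fun z hf hg => Eq'_mul_Eq'_neg_eq_one hq1 hf hg⟩
  rw [mul_div_assoc', eq_div_iff (sub_ne_zero.mpr hne.symm)]
  exact Eq'_mul_one_sub hq1 hf

/-- Functional equation for E_q(a,b;z) and the inverse identity
E_q(a,b;z)·E_q(b,a;−z) = 1 on the common domain of convergence. -/
theorem Eq_functional_and_inverse (q a b : ℝ) (hq0 : 0 < |q|) (hq1 : |q| < 1) :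
    (∀ z : ℝ,
      Summable (fun n : ℕ =>
        (∏ i ∈ Finset.range n, (a + b * q ^ i)) * z ^ n / qFactorial q n) →
      a * (1 - q) * z ≠ 1 →
      Eq' q a b z = Eq' q a b (q * z) * ((1 + b * (1 - q) * z) / (1 - a * (1 - q) * z))) ∧
    (∀ z : ℝ,
      Summable (fun n : ℕ =>
        (∏ i ∈ Finset.range n, (a + b * q ^ i)) * z ^ n / qFactorial q n) →
      Summable (fun n : ℕ =>
        (∏ i ∈ Finset.range n, (b + a * q ^ i)) * (-z) ^ n / qFactorial q n) →
      Eq' q a b z * Eq' q b a (-z) = 1) :=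
  Eq_functional_and_inverse_general q a b hq1
end
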